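/- Let R be an exchange ring (an associative unital ring such that for every x in R there exists an idempotent e in xR with 1-e in (1-x)R). Then for any positive integer m and elements x_1, ..., x_m in R with x_1 + ... + x_m = 1, there exist pairwise orthogonal idempotents e_1, ..., e_m in R with e_i in x_i R for each i and e_1 + ... + e_m = 1. -/

import Mathlib

open Matrix

/-- An exchange ring: for every `x` there is an idempotent `e ∈ xR` with `1 - e ∈ (1-x)R`. -/
def IsExchangeRing (R : Type*) [Ring R] : Prop :=
  ∀ x : R, ∃ e r s : R, e * e = e ∧ e = x * r ∧ 1 - e = (1 - x) * s

/-- The elementary transvection `t_{ij}(x) = e + x e^{ij}` as an element of `GL n R`. -/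
def transv {n : ℕ} {R : Type*} [Ring R] (i j : Fin n) (hij : i ≠ j) (x : R) :
    (Matrix (Fin n) (Fin n) R)ˣ :=
  ⟨1 + Matrix.single i j x, 1 + Matrix.single i j (-x),
    by
      have h0 : Matrix.single i j x * Matrix.single i j (-x) = 0 :=
        Matrix.single_mul_single_of_ne _ _ _ _ hij.symm _
      have h1 : Matrix.single i j (-x) * Matrix.single i j x = 0 :=
        Matrix.single_mul_single_of_ne _ _ _ _ hij.symm _
      simp [mul_add, add_mul, h0, h1, ← Matrix.single_add, add_assoc],
    by
      have h0 : Matrix.single i j x * Matrix.single i j (-x) = 0 :=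
        Matrix.single_mul_single_of_ne _ _ _ _ hij.symm _
      have h1 : Matrix.single i j (-x) * Matrix.single i j x = 0 :=
        Matrix.single_mul_single_of_ne _ _ _ _ hij.symm _
      simp [mul_add, add_mul, h0, h1, ← Matrix.single_add, add_assoc]⟩

/-- The elementary subgroup `E_n(R)` of `GL_n(R)`. -/
def elemGroup (n : ℕ) (R : Type*) [Ring R] : Subgroup ((Matrix (Fin n) (Fin n) R)ˣ) :=
  Subgroup.closure { g | ∃ i j : Fin n, ∃ hij : i ≠ j, ∃ x : R, g = transv i j hij x }

/-- The preelementary subgroup `E_n(I)` of level a two-sided ideal `I`. -/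
def preElem (n : ℕ) (R : Type*) [Ring R] (I : TwoSidedIdeal R) : Subgroup ((Matrix (Fin n) (Fin n) R)ˣ) :=
  Subgroup.closure { g | ∃ i j : Fin n, ∃ hij : i ≠ j, ∃ x ∈ I, g = transv i j hij x }

/-- The relative elementary subgroup `E_n(R,I)`: the normal closure of `E_n(I)` in `E_n(R)`. -/
def relElem (n : ℕ) (R : Type*) [Ring R] (I : TwoSidedIdeal R) : Subgroup ((Matrix (Fin n) (Fin n) R)ˣ) :=
  Subgroup.closure { g | ∃ τ ∈ elemGroup n R, ∃ ε ∈ preElem n R I, g = τ⁻¹ * ε * τ }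

/-- The full congruence subgroup `C_n(R,I)`: preimage of the center of `GL_n(R/I)`. -/
def congrSubgroup (n : ℕ) (R : Type*) [Ring R] (I : TwoSidedIdeal R) :
    Subgroup ((Matrix (Fin n) (Fin n) R)ˣ) :=
  Subgroup.comap
    (Units.map ((RingHom.mapMatrix (RingCon.mk' I.ringCon)).toMonoidHom :
      Matrix (Fin n) (Fin n) R →* Matrix (Fin n) (Fin n) I.ringCon.Quotient))
    (Subgroup.center ((Matrix (Fin n) (Fin n) I.ringCon.Quotient)ˣ))

/-- `x` is a product of `m` `H`-conjugates of `a` and `a⁻¹`. -/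
def IsProdConj {G : Type*} [Group G] (H : Subgroup G) (a x : G) (m : ℕ) : Prop :=
  ∃ f : Fin m → G, (∀ k, ∃ h ∈ H, f k = h⁻¹ * a * h ∨ f k = h⁻¹ * a⁻¹ * h) ∧
    x = (List.ofFn f).prod


/-!
Induct on `m`. Exchange for `x₀` gives an idempotent `e ∈ x₀R` with `f = 1 - e ∈ (x₁ + ⋯ + xₘ)R`,
say `f = (x₁ + ⋯ + xₘ) s`. The corner ring `fRf` is again an exchange ring, and the elements
`f xᵢ s f` sum to its identity `f`, so by induction it carries a complete family of orthogonal
idempotents `gᵢ ∈ f xᵢ s f · fRf`. Together with `e` they form a complete orthogonal family in `R`,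
but `gᵢ` only lies in `f xᵢ R`. Writing `gᵢ = f dᵢ` with `dᵢ ∈ xᵢR`, conjugation by the unit `1 + n`,
`n = ∑ e dᵢ gᵢ` (note `n² = 0`), turns `gᵢ` into `dᵢ gᵢ ∈ xᵢR` and `e` into an element of `eR ⊆ x₀R`.
-/

def IsIdempotentElem.cornerSubtype {R : Type*} [Ring R] {f : R} (hf : IsIdempotentElem f) :
    hf.Corner →ₙ+* R where
  toFun := Subtype.val
  map_mul' _ _ := rfl
  map_zero' := rfl
  map_add' _ _ := rfl

lemma OrthogonalIdempotents.map_nonUnitalRingHom {R S I : Type*} [Semiring R] [Semiring S]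
    {e : I → R} (he : OrthogonalIdempotents e) (φ : R →ₙ+* S) : OrthogonalIdempotents (φ ∘ e) :=
  ⟨fun i => (he.idem i).map φ, fun i j hij => by simp [← map_mul, he.ortho hij]⟩

lemma OrthogonalIdempotents.completeOrthogonalIdempotents_cons {R : Type*} [Ring R] {m : ℕ}
    {g : Fin m → R} (hg : OrthogonalIdempotents g) :
    CompleteOrthogonalIdempotents (Fin.cons (1 - ∑ i, g i) g : Fin (m + 1) → R) := by
  convert (CompleteOrthogonalIdempotents.equiv (finSuccEquiv m)).mpr
    (CompleteOrthogonalIdempotents.option hg) using 1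
  ext i
  cases i using Fin.cases <;> simp

lemma CompleteOrthogonalIdempotents.units_conj {R I : Type*} [Semiring R] [Fintype I]
    {e : I → R} (he : CompleteOrthogonalIdempotents e) (u : Rˣ) :
    CompleteOrthogonalIdempotents (fun i => u * e i * ↑u⁻¹) :=
  he.map (MulSemiringAction.toRingHom (ConjAct Rˣ) R (ConjAct.toConjAct u))

def Units.oneAddOfMulSelfEqZero {R : Type*} [Ring R] {n : R} (hn : n * n = 0) : Rˣ :=
  ⟨1 + n, 1 - n, by noncomm_ring; simp [hn], by noncomm_ring; simp [hn]⟩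

lemma CompleteOrthogonalIdempotents.cons_mul {R : Type*} [Ring R] {m : ℕ} {e : R}
    {g d : Fin m → R} (hg : CompleteOrthogonalIdempotents (Fin.cons e g : Fin (m + 1) → R))
    (hd : ∀ i, (1 - e) * d i * g i = g i) :
    CompleteOrthogonalIdempotents
      (Fin.cons (e * (1 - ∑ i, d i * g i)) (fun i => d i * g i) : Fin (m + 1) → R) := by
  have he : IsIdempotentElem e := by simpa using hg.idem 0
  have hgi (i) : IsIdempotentElem (g i) := by simpa using hg.idem i.succ
  have hge (i) : g i * e = 0 := by simpa using hg.ortho (Fin.succ_ne_zero i)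
  have hgg (i j) (hij : i ≠ j) : g i * g j = 0 := by
    simpa using hg.ortho (Fin.succ_injective _ |>.ne hij)
  set n := ∑ i, e * d i * g i with hn
  have hen : e * n = n := by simp only [hn, Finset.mul_sum, ← mul_assoc, he.eq]
  have hne : n * e = 0 := by simp [hn, Finset.sum_mul, mul_assoc, hge]
  have hgn (i) : g i * n = 0 := by simp [hn, Finset.mul_sum, ← mul_assoc, hge]
  have hng (i) : n * g i = e * d i * g i := by
    rw [hn, Finset.sum_mul, Finset.sum_eq_single i]
    · rw [mul_assoc, (hgi i).eq]
    · intro j _ hji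
      rw [mul_assoc, hgg j i hji, mul_zero]
    · simp
  have hnn : n * n = 0 := by
    nth_rewrite 1 [hn]
    rw [Finset.sum_mul]
    exact Finset.sum_eq_zero fun i _ => by rw [mul_assoc, hgn, mul_zero]
  convert hg.units_conj (Units.oneAddOfMulSelfEqZero hnn) using 1
  ext i
  cases i using Fin.cases with
  | zero =>
    show e * (1 - ∑ i, d i * g i) = (1 + n) * e * (1 - n)
    calc e * (1 - ∑ i, d i * g i) = e - n := by
          rw [mul_sub, mul_one, hn, Finset.mul_sum]; simp only [mul_assoc]
      _ = (1 + n) * e * (1 - n) := by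
          linear_combination (norm := noncomm_ring) hen - hne + hne * n
  | succ i =>
    show d i * g i = (1 + n) * g i * (1 - n)
    linear_combination (norm := noncomm_ring)
      hd i + hgn i - hng i + hng i * n + e * d i * hgn i

/-- Exchange for `a + (1 - f)` in `R` gives an idempotent `e` with `(1 - f) e = 1 - f`;
its cut-down `e f` is the idempotent required in `fRf`. -/
theorem IsExchangeRing.corner {R : Type*} [Ring R] (hR : IsExchangeRing R) {f : R}
    (hf : IsIdempotentElem f) : IsExchangeRing hf.Corner := by
  rintro ⟨a, ha⟩
  obtain ⟨hfa, haf⟩ := (Subsemigroup.mem_corner_iff hf).1 ha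
  obtain ⟨e, r, s, he, her, hes⟩ := hR (a + (1 - f))
  rw [show 1 - (a + (1 - f)) = f - a by abel] at hes
  have hfe : f * e = e + f - 1 := by
    have : f * (1 - e) = 1 - e := by rw [hes, ← mul_assoc, mul_sub, hf.eq, hfa]
    linear_combination (norm := noncomm_ring) -this
  have hfef : f * e * f = e * f := by
    rw [hfe, sub_mul, add_mul, hf.eq, one_mul]; abel
  refine ⟨⟨e * f, e, hfef⟩, ⟨f * r * f, r, rfl⟩, ⟨f * s * f, s, rfl⟩,
    Subtype.ext ?_, Subtype.ext ?_, Subtype.ext ?_⟩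
  · show e * f * (e * f) = e * f
    linear_combination (norm := noncomm_ring) e * hfe * f + he * f + e * hf.eq
  · show e * f = a * (f * r * f)
    linear_combination (norm := noncomm_ring)
      -hfef + f * her * f + hfa * r * f - hf.eq * r * f - haf * r * f
  · show f - e * f = (f - a) * (f * s * f)
    linear_combination (norm := noncomm_ring) hes * f - hf.eq * s * f + haf * s * f

theorem IsExchangeRing.exists_completeOrthogonalIdempotents {R : Type*} [Ring R]
    (hR : IsExchangeRing R) {m : ℕ} (x : Fin m → R) (hx : ∑ i, x i = 1) :
    ∃ e : Fin m → R, CompleteOrthogonalIdempotents e ∧ ∀ i, ∃ r, e i = x i * r := by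
  induction m generalizing R with
  | zero =>
    exact ⟨Fin.elim0, ⟨⟨fun i => i.elim0, fun i => i.elim0⟩, by simpa using hx⟩,
      fun i => i.elim0⟩
  | succ m ih =>
    obtain ⟨e, r, s, he, her, hes⟩ := hR (x 0)
    have hf : IsIdempotentElem (1 - e) := IsIdempotentElem.one_sub he
    set f := 1 - e with hfdef
    let ι := hf.cornerSubtype
    rw [← hx, Fin.sum_univ_succ, add_sub_cancel_left] at hes
    let z : Fin m → hf.Corner := fun i => ⟨f * (x i.succ * s) * f, _, rfl⟩
    have hz : ∑ i, z i = 1 := by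
      apply Subtype.ext
      change ι (∑ i, z i) = f
      calc ι (∑ i, z i) = f * ((∑ i : Fin m, x i.succ) * s) * f := by
            rw [map_sum, Finset.sum_mul, Finset.mul_sum, Finset.sum_mul]; rfl
        _ = f := by rw [← hes, hf.eq, hf.eq]
    obtain ⟨g, hg, hgz⟩ := ih (hR.corner hf) z hz
    choose c hc using hgz
    have hgsum : ∑ i, ι (g i) = f := by rw [← map_sum, hg.complete]; rfl
    have hcons := (hg.map_nonUnitalRingHom ι).completeOrthogonalIdempotents_cons
    simp only [Function.comp_apply, hgsum, hfdef, sub_sub_cancel] at hcons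
    have hG (i) : ι (g i) = f * (x i.succ * (s * f * ι (c i))) := by
      rw [hc, map_mul]
      change f * (x i.succ * s) * f * ι (c i) = _
      simp only [mul_assoc]
    have hd (i) : f * (x i.succ * (s * f * ι (c i))) * ι (g i) = ι (g i) := by
      rw [← hG, ← map_mul, (hg.idem i).eq]
    refine ⟨_, hcons.cons_mul hd, fun i => ?_⟩
    cases i using Fin.cases with
    | zero => exact ⟨r * _, by rw [Fin.cons_zero, her, mul_assoc]⟩
    | succ i =>
      exact ⟨s * f * ι (c i) * ι (g i),
        by simp only [Fin.cons_succ, Function.comp_apply, mul_assoc]⟩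

theorem exchange_orthogonal_idempotents_general (R : Type*) [Ring R] (hR : IsExchangeRing R)
    (m : ℕ) (x : Fin m → R) (hx : ∑ i, x i = 1) :
    ∃ e : Fin m → R, (∀ i, e i * e i = e i) ∧ (∀ i j, i ≠ j → e i * e j = 0) ∧
      (∀ i, ∃ r : R, e i = x i * r) ∧ ∑ i, e i = 1 := by
  obtain ⟨e, he, hmem⟩ := hR.exists_completeOrthogonalIdempotents x hx
  exact ⟨e, fun i => (he.idem i).eq, fun _ _ hij => he.ortho hij, hmem, he.complete⟩

theorem exchange_orthogonal_idempotents (R : Type*) [Ring R] (hR : IsExchangeRing R)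
    (m : ℕ) (hm : 0 < m) (x : Fin m → R) (hx : ∑ i, x i = 1) :
    ∃ e : Fin m → R, (∀ i, e i * e i = e i) ∧ (∀ i j, i ≠ j → e i * e j = 0) ∧
      (∀ i, ∃ r : R, e i = x i * r) ∧ ∑ i, e i = 1 :=
  exchange_orthogonal_idempotents_general R hR m x hx
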